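/- Let ρ be any (mixed) density matrix on ℂ^{d₁} ⊗ ℂ^{d₂}. Then the correlation tensor satisfies ‖T^{(12)}‖² ≤ min{d₁d₂ − d₁/d₂, d₁d₂ − d₂/d₁}, where ‖T^{(12)}‖² = ∑ |tr(ρ (A_{i₁j₁})† ⊗ (A_{i₂j₂})†)|² summed over nonzero Weyl index pairs on each factor. -/

import Mathlib

open Matrix Kronecker ComplexOrder
open scoped ComplexConjugate

/-- The Weyl operator `A_{ij} = ∑_{m ∈ ℤ_d} ω^{im} E_{m, m+j}` on `ℂ^d`. -/
noncomputable def Weyl (d : ℕ) [NeZero d] (ω : ℂ) (i j : ZMod d) :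
    Matrix (ZMod d) (ZMod d) ℂ :=
  ∑ m : ZMod d, (ω ^ (i * m).val) • Matrix.single m (m + j) (1 : ℂ)

noncomputable def chE (d : ℕ) [NeZero d] (ω : ℂ) (z : ZMod d) : ℂ := ω ^ z.val

lemma mul_conj_self' (z : ℂ) : z * conj z = ((‖z‖ ^ 2 : ℝ) : ℂ) := by
  rw [Complex.mul_conj]; norm_cast
  rw [Complex.normSq_eq_norm_sq]

section Char
variable {d : ℕ} [NeZero d] {ω : ℂ}

lemma chE_zero : chE d ω 0 = 1 := by simp [chE]

lemma chE_add (hω : IsPrimitiveRoot ω d) (x y : ZMod d) :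
    chE d ω (x + y) = chE d ω x * chE d ω y := by
  have h := pow_mod_orderOf ω (x.val + y.val)
  rw [← hω.eq_orderOf] at h
  unfold chE
  rw [ZMod.val_add, h, pow_add]

lemma norm_chE_one (hω : IsPrimitiveRoot ω d) (z : ZMod d) : ‖chE d ω z‖ = 1 := by
  have h1 : ω ^ d = 1 := hω.pow_eq_one
  have hd : d ≠ 0 := NeZero.ne d
  have : ‖ω‖ = 1 := by
    have h2 : ‖ω‖ ^ d = 1 := by rw [← norm_pow, h1, norm_one]
    rcases lt_trichotomy ‖ω‖ 1 with h | h | h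
    · exfalso
      have := pow_lt_one₀ (norm_nonneg ω) h hd
      rw [h2] at this; exact lt_irrefl _ this
    · exact h
    · exfalso
      have := one_lt_pow₀ h hd
      rw [h2] at this; exact lt_irrefl _ this
  simp [chE, norm_pow, this]

lemma chE_ne_zero (hω : IsPrimitiveRoot ω d) (z : ZMod d) : chE d ω z ≠ 0 := by
  intro h
  have := norm_chE_one hω z
  rw [h, norm_zero] at this; norm_num at this

lemma chE_conj (hω : IsPrimitiveRoot ω d) (z : ZMod d) :
    conj (chE d ω z) = chE d ω (-z) := by
  have h1 : chE d ω z * conj (chE d ω z) = 1 := by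
    rw [Complex.mul_conj]
    norm_cast
    rw [Complex.normSq_eq_norm_sq, norm_chE_one hω z]; norm_num
  have h2 : chE d ω z * chE d ω (-z) = 1 := by
    rw [← chE_add hω, add_neg_cancel, chE_zero]
  exact mul_left_cancel₀ (chE_ne_zero hω z) (h1.trans h2.symm)

lemma chE_nsmul (hω : IsPrimitiveRoot ω d) (k : ℕ) (n : ZMod d) :
    chE d ω (k • n) = chE d ω n ^ k := by
  induction k with
  | zero => simp [chE_zero]
  | succ k ih => rw [succ_nsmul, chE_add hω, ih, pow_succ]

lemma chE_sum (hω : IsPrimitiveRoot ω d) (n : ZMod d) :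
    ∑ i : ZMod d, chE d ω (i * n) = if n = 0 then (d : ℂ) else 0 := by
  by_cases hn : n = 0
  · simp [hn, chE]
  · simp only [hn, if_false]
    have key : ∀ i : ZMod d, chE d ω (i * n) = (chE d ω n) ^ i.val := by
      intro i
      rw [← chE_nsmul hω]
      congr 1
      have hh : ((i.val : ℕ) : ZMod d) = i := ZMod.natCast_rightInverse i
      rw [nsmul_eq_mul, hh]
    calc ∑ i : ZMod d, chE d ω (i * n) = ∑ i : ZMod d, (chE d ω n) ^ i.val :=
          Finset.sum_congr rfl fun i _ => key i
      _ = ∑ k ∈ Finset.range d, (chE d ω n) ^ k := by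
          refine Finset.sum_nbij' (fun i => i.val) (fun k => (k : ZMod d))
            (fun i _ => Finset.mem_range.mpr (ZMod.val_lt i))
            (fun k _ => Finset.mem_univ _)
            (fun i _ => ZMod.natCast_rightInverse i)
            (fun k hk => ZMod.val_cast_of_lt (Finset.mem_range.mp hk))
            (fun i _ => rfl)
      _ = 0 := by
          have hne : chE d ω n ≠ 1 := by
            unfold chE
            apply hω.pow_ne_one_of_pos_of_lt
            · exact (fun h => hn ((ZMod.val_eq_zero n).mp h))
            · exact ZMod.val_lt n
          rw [geom_sum_eq hne]
          have hr : chE d ω n ^ d = 1 := by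
            rw [← chE_nsmul hω]
            have hz : (d : ℕ) • n = 0 := by
              simp [nsmul_eq_mul, ZMod.natCast_self]
            rw [hz, chE_zero]
          rw [hr, sub_self, zero_div]

lemma chE_ortho (hω : IsPrimitiveRoot ω d) (m m' : ZMod d) :
    ∑ i : ZMod d, chE d ω (i * m) * conj (chE d ω (i * m')) =
      if m = m' then (d : ℂ) else 0 := by
  have h : ∀ i : ZMod d, chE d ω (i * m) * conj (chE d ω (i * m')) =
      chE d ω (i * (m - m')) := by
    intro i
    rw [chE_conj hω, ← chE_add hω]
    congr 1; ring
  rw [Finset.sum_congr rfl fun i _ => h i, chE_sum hω]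
  simp [sub_eq_zero]
end Char

lemma parseval {I N : Type*} [Fintype I] [Fintype N] [DecidableEq N]
    (e : I → N → ℂ) (c : ℝ)
    (h : ∀ n n', ∑ i : I, e i n * conj (e i n') = if n = n' then (c : ℂ) else 0)
    (f : N → ℂ) :
    ∑ i : I, ‖∑ n : N, f n * conj (e i n)‖ ^ 2 = c * ∑ n : N, ‖f n‖ ^ 2 := by
  set z : I → ℂ := fun i => ∑ n : N, f n * conj (e i n) with hz
  have key : ∑ i : I, z i * conj (z i) = (c : ℂ) * ∑ n : N, f n * conj (f n) := by
    have expand : ∀ i, z i * conj (z i) =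
        ∑ n : N, ∑ n' : N, (f n * conj (f n')) * (e i n' * conj (e i n)) := by
      intro i
      rw [hz]
      simp only [map_sum, Finset.sum_mul_sum, _root_.map_mul, Complex.conj_conj]
      exact Finset.sum_congr rfl fun n _ => Finset.sum_congr rfl fun n' _ => by ring
    calc ∑ i : I, z i * conj (z i)
        = ∑ i : I, ∑ n : N, ∑ n' : N, (f n * conj (f n')) * (e i n' * conj (e i n)) :=
          Finset.sum_congr rfl fun i _ => expand i
      _ = ∑ n : N, ∑ n' : N, (f n * conj (f n')) * ∑ i : I, e i n' * conj (e i n) := by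
          rw [Finset.sum_comm]
          refine Finset.sum_congr rfl fun n _ => ?_
          rw [Finset.sum_comm]
          refine Finset.sum_congr rfl fun n' _ => ?_
          rw [Finset.mul_sum]
      _ = ∑ n : N, (f n * conj (f n)) * (c : ℂ) := by
          refine Finset.sum_congr rfl fun n _ => ?_
          rw [Finset.sum_eq_single n]
          · rw [h n n, if_pos rfl]
          · intro n' _ hne
            rw [h n' n, if_neg hne, mul_zero]
          · intro hn; exact absurd (Finset.mem_univ n) hn
      _ = (c : ℂ) * ∑ n : N, f n * conj (f n) := by
          rw [Finset.mul_sum]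
          exact Finset.sum_congr rfl fun n _ => by ring
  have lhs : (∑ i : I, ‖z i‖ ^ 2 : ℝ) = (∑ i : I, z i * conj (z i)).re := by
    rw [Complex.re_sum]
    refine Finset.sum_congr rfl fun i _ => ?_
    rw [mul_conj_self', Complex.ofReal_re]
  have rhs : ∑ n : N, f n * conj (f n) = ((∑ n : N, ‖f n‖ ^ 2 : ℝ) : ℂ) := by
    rw [Complex.ofReal_sum]
    exact Finset.sum_congr rfl fun n _ => mul_conj_self' (f n)
  rw [lhs, key, rhs, ← Complex.ofReal_mul, Complex.ofReal_re]

lemma weyl_apply (d : ℕ) [NeZero d] (ω : ℂ) (i j a b : ZMod d) :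
    Weyl d ω i j a b = if b = a + j then chE d ω (i * a) else 0 := by
  unfold Weyl chE
  rw [Matrix.sum_apply]
  rw [Finset.sum_eq_single a]
  · by_cases h : b = a + j
    · simp [h, Matrix.single, Matrix.smul_apply]
    · simp only [Matrix.smul_apply, Matrix.single, Matrix.of_apply, if_neg h]
      rw [if_neg (by rintro ⟨-, h2⟩; exact h h2.symm)]
      simp [h]
  · intro m _ hm
    simp only [Matrix.smul_apply, Matrix.single, Matrix.of_apply]
    rw [if_neg (by rintro ⟨rfl, h2⟩; exact hm rfl)]
    simp
  · intro h; exact absurd (Finset.mem_univ a) h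

lemma trace_mul_conjTranspose_eq {n : Type*} [Fintype n] [DecidableEq n]
    (M W : Matrix n n ℂ) :
    Matrix.trace (M * Wᴴ) = ∑ a : n, ∑ b : n, M a b * conj (W a b) := by
  unfold Matrix.trace
  simp only [Matrix.diag_apply, Matrix.mul_apply, Matrix.conjTranspose_apply]
  rfl

lemma trace_mul_kron (d₁ d₂ : ℕ) [NeZero d₁] [NeZero d₂] (ω₁ ω₂ : ℂ)
    (ρ : Matrix (ZMod d₁ × ZMod d₂) (ZMod d₁ × ZMod d₂) ℂ)
    (i₁ j₁ : ZMod d₁) (i₂ j₂ : ZMod d₂) :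
    Matrix.trace (ρ * ((Weyl d₁ ω₁ i₁ j₁) ⊗ₖ (Weyl d₂ ω₂ i₂ j₂))ᴴ) =
      ∑ a : ZMod d₁ × ZMod d₂, ρ a (a.1 + j₁, a.2 + j₂) *
        conj (chE d₁ ω₁ (i₁ * a.1) * chE d₂ ω₂ (i₂ * a.2)) := by
  rw [trace_mul_conjTranspose_eq]
  refine Finset.sum_congr rfl fun a _ => ?_
  rw [Finset.sum_eq_single ((a.1 + j₁, a.2 + j₂) : ZMod d₁ × ZMod d₂)]
  · rw [Matrix.kroneckerMap_apply, weyl_apply, weyl_apply]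
    simp
  · intro b _ hb
    rw [Matrix.kroneckerMap_apply, weyl_apply, weyl_apply]
    have hnb : ¬(b.1 = a.1 + j₁ ∧ b.2 = a.2 + j₂) := by
      intro ⟨h1, h2⟩
      exact hb (Prod.ext h1 h2)
    by_cases h1 : b.1 = a.1 + j₁
    · have h2 : ¬ b.2 = a.2 + j₂ := fun h2 => hnb ⟨h1, h2⟩
      simp [h2]
    · simp [h1]
  · intro h; exact absurd (Finset.mem_univ _) h

noncomputable def fsq {m n : Type*} [Fintype m] [Fintype n] (M : Matrix m n ℂ) : ℝ :=
  ∑ i : m, ∑ j : n, ‖M i j‖ ^ 2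

section Frob
variable {m n : Type*} [Fintype m] [Fintype n]

lemma fsq_nonneg (M : Matrix m n ℂ) : 0 ≤ fsq M := by
  unfold fsq; positivity

lemma trace_conjTranspose_mul_self (A : Matrix m n ℂ) :
    Matrix.trace (Aᴴ * A) = ((fsq A : ℝ) : ℂ) := by
  unfold Matrix.trace fsq
  simp only [Matrix.diag_apply, Matrix.mul_apply, Matrix.conjTranspose_apply]
  rw [Finset.sum_comm, Complex.ofReal_sum]
  refine Finset.sum_congr rfl fun i _ => ?_
  rw [Complex.ofReal_sum]
  refine Finset.sum_congr rfl fun j _ => ?_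
  rw [← mul_conj_self' (A i j)]
  exact mul_comm _ _

noncomputable def innr (A B : Matrix m n ℂ) : ℝ := (Matrix.trace (Aᴴ * B)).re

lemma innr_self (A : Matrix m n ℂ) : innr A A = fsq A := by
  rw [innr, trace_conjTranspose_mul_self, Complex.ofReal_re]

lemma innr_entry (A B : Matrix m n ℂ) :
    innr A B = ∑ i : m, ∑ j : n, (conj (A i j) * B i j).re := by
  unfold innr Matrix.trace
  simp only [Matrix.diag_apply, Matrix.mul_apply, Matrix.conjTranspose_apply]
  rw [Complex.re_sum, Finset.sum_comm]
  refine Finset.sum_congr rfl fun i _ => ?_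
  rw [Complex.re_sum]
  rfl

lemma fsq_flat (A : Matrix m n ℂ) : fsq A = ∑ p : m × n, ‖A p.1 p.2‖ ^ 2 := by
  rw [fsq, Fintype.sum_prod_type]

lemma innr_le_sqrt (A B : Matrix m n ℂ) :
    innr A B ≤ Real.sqrt (fsq A) * Real.sqrt (fsq B) := by
  rw [innr_entry]
  have h1 : ∑ i : m, ∑ j : n, (conj (A i j) * B i j).re
      = ∑ p : m × n, (conj (A p.1 p.2) * B p.1 p.2).re := by
    rw [Fintype.sum_prod_type]
  rw [h1]
  have h2 : ∑ p : m × n, (conj (A p.1 p.2) * B p.1 p.2).re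
      ≤ ∑ p : m × n, ‖A p.1 p.2‖ * ‖B p.1 p.2‖ := by
    refine Finset.sum_le_sum fun p _ => ?_
    calc (conj (A p.1 p.2) * B p.1 p.2).re ≤ ‖conj (A p.1 p.2) * B p.1 p.2‖ :=
          Complex.re_le_norm _
      _ = ‖A p.1 p.2‖ * ‖B p.1 p.2‖ := by rw [norm_mul, RCLike.norm_conj]
  refine h2.trans ?_
  have h3 := Finset.sum_mul_sq_le_sq_mul_sq Finset.univ
    (fun p : m × n => ‖A p.1 p.2‖) (fun p : m × n => ‖B p.1 p.2‖)
  have h4 : (0:ℝ) ≤ ∑ p : m × n, ‖A p.1 p.2‖ * ‖B p.1 p.2‖ := by positivity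
  have h5 := Real.sqrt_le_sqrt h3
  rw [Real.sqrt_sq h4] at h5
  refine h5.trans ?_
  rw [Real.sqrt_mul (by positivity), fsq_flat, fsq_flat]

lemma innr_sum_sum {κ : Type*} [Fintype κ] (f g : κ → Matrix m n ℂ) :
    innr (∑ k : κ, f k) (∑ l : κ, g l) = ∑ k : κ, ∑ l : κ, innr (f k) (g l) := by
  unfold innr
  rw [Matrix.conjTranspose_sum, Matrix.sum_mul]
  rw [Matrix.trace_sum, Complex.re_sum]
  refine Finset.sum_congr rfl fun k _ => ?_
  rw [Matrix.mul_sum, Matrix.trace_sum, Complex.re_sum]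
end Frob

section Gram
variable {s n₁ n₂ : Type*} [Fintype s] [Fintype n₁] [Fintype n₂]

lemma fsq_WHW (W W' : Matrix s n₁ ℂ) :
    fsq (Wᴴ * W') = innr (W' * W'ᴴ) (W * Wᴴ) := by
  have h1 : (Wᴴ * W')ᴴ * (Wᴴ * W') = W'ᴴ * (W * (Wᴴ * W')) := by
    rw [Matrix.conjTranspose_mul, Matrix.conjTranspose_conjTranspose]
    simp only [Matrix.mul_assoc]
  have h2 : (W' * W'ᴴ)ᴴ * (W * Wᴴ) = W' * (W'ᴴ * (W * Wᴴ)) := by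
    rw [Matrix.conjTranspose_mul, Matrix.conjTranspose_conjTranspose]
    simp only [Matrix.mul_assoc]
  have key : Matrix.trace ((Wᴴ * W')ᴴ * (Wᴴ * W')) =
      Matrix.trace ((W' * W'ᴴ)ᴴ * (W * Wᴴ)) := by
    rw [h1, h2, Matrix.trace_mul_comm (W'ᴴ) (W * (Wᴴ * W')),
        Matrix.trace_mul_comm (W') (W'ᴴ * (W * Wᴴ))]
    simp only [Matrix.mul_assoc]
    rw [Matrix.trace_mul_comm (W'ᴴ) (W * (Wᴴ * W'))]
    simp only [Matrix.mul_assoc]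
  have h := congrArg Complex.re key
  rw [← innr, ← innr] at h
  rw [← innr_self, h]

lemma fsq_WWH (W : Matrix s n₁ ℂ) : fsq (W * Wᴴ) = fsq (Wᴴ * W) := by
  have h := fsq_WHW W W
  rw [innr_self] at h
  exact h.symm

lemma innr_XX (W W' : Matrix s n₁ ℂ) :
    innr (Wᴴ * W) (W'ᴴ * W') = fsq (W' * Wᴴ) := by
  rw [← innr_self (W' * Wᴴ)]
  unfold innr
  congr 1
  rw [Matrix.conjTranspose_mul, Matrix.conjTranspose_conjTranspose,
      Matrix.conjTranspose_mul, Matrix.conjTranspose_conjTranspose]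
  have e1 : (Wᴴ * W) * (W'ᴴ * W') = Wᴴ * (W * (W'ᴴ * W')) := by
    simp only [Matrix.mul_assoc]
  rw [e1, Matrix.trace_mul_comm]
  simp only [Matrix.mul_assoc]

lemma gram_bound (W : n₂ → Matrix s n₁ ℂ) :
    ∑ k : n₂, ∑ k' : n₂, fsq ((W k)ᴴ * W k') ≤
      (Fintype.card n₂ : ℝ) * fsq (∑ k : n₂, (W k)ᴴ * W k) := by
  have step1 : ∑ k : n₂, ∑ k' : n₂, fsq ((W k)ᴴ * W k')
      ≤ (Fintype.card n₂ : ℝ) * ∑ k : n₂, fsq ((W k)ᴴ * W k) := by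
    have hb : ∀ k k' : n₂, fsq ((W k)ᴴ * W k')
        ≤ Real.sqrt (fsq ((W k')ᴴ * W k')) * Real.sqrt (fsq ((W k)ᴴ * W k)) := by
      intro k k'
      rw [fsq_WHW]
      have h := innr_le_sqrt (W k' * (W k')ᴴ) (W k * (W k)ᴴ)
      rw [fsq_WWH, fsq_WWH] at h
      exact h
    calc ∑ k : n₂, ∑ k' : n₂, fsq ((W k)ᴴ * W k')
        ≤ ∑ k : n₂, ∑ k' : n₂,
            Real.sqrt (fsq ((W k')ᴴ * W k')) * Real.sqrt (fsq ((W k)ᴴ * W k)) :=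
          Finset.sum_le_sum fun k _ => Finset.sum_le_sum fun k' _ => hb k k'
      _ = (∑ k : n₂, Real.sqrt (fsq ((W k)ᴴ * W k))) ^ 2 := by
          rw [sq, Finset.sum_mul_sum]
          refine Finset.sum_congr rfl fun k _ => ?_
          refine Finset.sum_congr rfl fun k' _ => ?_
          ring
      _ ≤ (Fintype.card n₂ : ℝ) * ∑ k : n₂, Real.sqrt (fsq ((W k)ᴴ * W k)) ^ 2 := by
          have h := sq_sum_le_card_mul_sum_sq (α := ℝ)
            (s := (Finset.univ : Finset n₂))
            (f := fun k => Real.sqrt (fsq ((W k)ᴴ * W k)))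
          simpa using h
      _ = (Fintype.card n₂ : ℝ) * ∑ k : n₂, fsq ((W k)ᴴ * W k) := by
          congr 1
          exact Finset.sum_congr rfl fun k _ => Real.sq_sqrt (fsq_nonneg _)
  refine step1.trans ?_
  have step2 : ∑ k : n₂, fsq ((W k)ᴴ * W k) ≤ fsq (∑ k : n₂, (W k)ᴴ * W k) := by
    rw [← innr_self, innr_sum_sum]
    calc ∑ k : n₂, fsq ((W k)ᴴ * W k)
        = ∑ k : n₂, innr ((W k)ᴴ * W k) ((W k)ᴴ * W k) :=
          Finset.sum_congr rfl fun k _ => (innr_self _).symm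
      _ ≤ ∑ k : n₂, ∑ l : n₂, innr ((W k)ᴴ * W k) ((W l)ᴴ * W l) := by
          refine Finset.sum_le_sum fun k _ => ?_
          exact Finset.single_le_sum
            (f := fun l => innr ((W k)ᴴ * W k) ((W l)ᴴ * W l))
            (fun l _ => by rw [innr_XX]; exact fsq_nonneg _)
            (Finset.mem_univ k)
  exact mul_le_mul_of_nonneg_left step2 (by positivity)
end Gram

section Appl
variable (d₁ d₂ : ℕ) [NeZero d₁] [NeZero d₂]

noncomputable def mar2 (ρ : Matrix (ZMod d₁ × ZMod d₂) (ZMod d₁ × ZMod d₂) ℂ) :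
    Matrix (ZMod d₁) (ZMod d₁) ℂ :=
  Matrix.of fun m m' => ∑ n : ZMod d₂, ρ (m, n) (m', n)

noncomputable def mar1 (ρ : Matrix (ZMod d₁ × ZMod d₂) (ZMod d₁ × ZMod d₂) ℂ) :
    Matrix (ZMod d₂) (ZMod d₂) ℂ :=
  Matrix.of fun n n' => ∑ m : ZMod d₁, ρ (m, n) (m, n')

variable {ω₁ ω₂ : ℂ}

lemma ortho_prod (hω₁ : IsPrimitiveRoot ω₁ d₁) (hω₂ : IsPrimitiveRoot ω₂ d₂)
    (a a' : ZMod d₁ × ZMod d₂) :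
    ∑ I : ZMod d₁ × ZMod d₂,
        (chE d₁ ω₁ (I.1 * a.1) * chE d₂ ω₂ (I.2 * a.2)) *
          conj (chE d₁ ω₁ (I.1 * a'.1) * chE d₂ ω₂ (I.2 * a'.2)) =
      if a = a' then (((d₁ : ℝ) * (d₂ : ℝ) : ℝ) : ℂ) else 0 := by
  rw [Fintype.sum_prod_type]
  have key : ∀ i₁ : ZMod d₁, ∀ i₂ : ZMod d₂,
      (chE d₁ ω₁ (i₁ * a.1) * chE d₂ ω₂ (i₂ * a.2)) *
        conj (chE d₁ ω₁ (i₁ * a'.1) * chE d₂ ω₂ (i₂ * a'.2)) =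
      (chE d₁ ω₁ (i₁ * a.1) * conj (chE d₁ ω₁ (i₁ * a'.1))) *
        (chE d₂ ω₂ (i₂ * a.2) * conj (chE d₂ ω₂ (i₂ * a'.2))) := by
    intro i₁ i₂
    rw [_root_.map_mul]
    ring
  calc ∑ i₁ : ZMod d₁, ∑ i₂ : ZMod d₂,
        (chE d₁ ω₁ (i₁ * a.1) * chE d₂ ω₂ (i₂ * a.2)) *
          conj (chE d₁ ω₁ (i₁ * a'.1) * chE d₂ ω₂ (i₂ * a'.2))
      = (∑ i₁ : ZMod d₁, chE d₁ ω₁ (i₁ * a.1) * conj (chE d₁ ω₁ (i₁ * a'.1))) *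
        (∑ i₂ : ZMod d₂, chE d₂ ω₂ (i₂ * a.2) * conj (chE d₂ ω₂ (i₂ * a'.2))) := by
        rw [Finset.sum_mul_sum]
        exact Finset.sum_congr rfl fun i₁ _ => Finset.sum_congr rfl fun i₂ _ => key i₁ i₂
    _ = _ := by
        rw [chE_ortho hω₁, chE_ortho hω₂]
        by_cases h1 : a.1 = a'.1 <;> by_cases h2 : a.2 = a'.2 <;>
          simp [h1, h2, Prod.ext_iff] <;> push_cast <;> ring

set_option maxHeartbeats 2000000 in
lemma sum_all (hω₁ : IsPrimitiveRoot ω₁ d₁) (hω₂ : IsPrimitiveRoot ω₂ d₂)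
    (ρ : Matrix (ZMod d₁ × ZMod d₂) (ZMod d₁ × ZMod d₂) ℂ) :
    ∑ p : ZMod d₁ × ZMod d₁, ∑ q : ZMod d₂ × ZMod d₂,
        ‖Matrix.trace (ρ * ((Weyl d₁ ω₁ p.1 p.2) ⊗ₖ (Weyl d₂ ω₂ q.1 q.2))ᴴ)‖ ^ 2 =
      ((d₁ : ℝ) * d₂) * ∑ a : ZMod d₁ × ZMod d₂, ∑ b : ZMod d₁ × ZMod d₂, ‖ρ a b‖ ^ 2 := by
  classical
  set T : (ZMod d₁ × ZMod d₁) → (ZMod d₂ × ZMod d₂) → ℝ := fun p q =>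
    ‖Matrix.trace (ρ * ((Weyl d₁ ω₁ p.1 p.2) ⊗ₖ (Weyl d₂ ω₂ q.1 q.2))ᴴ)‖ ^ 2 with hT
  calc ∑ p : ZMod d₁ × ZMod d₁, ∑ q : ZMod d₂ × ZMod d₂, T p q
      = ∑ x : (ZMod d₁ × ZMod d₁) × (ZMod d₂ × ZMod d₂), T x.1 x.2 :=
        (Fintype.sum_prod_type' (f := fun (p : ZMod d₁ × ZMod d₁) (q : ZMod d₂ × ZMod d₂) => T p q)).symm
    _ = ∑ y : (ZMod d₁ × ZMod d₂) × (ZMod d₁ × ZMod d₂),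
          T (y.1.1, y.2.1) (y.1.2, y.2.2) := by
        refine (Fintype.sum_equiv
          (Equiv.prodProdProdComm (ZMod d₁) (ZMod d₂) (ZMod d₁) (ZMod d₂))
          _ _ fun y => rfl).symm
    _ = ∑ I : ZMod d₁ × ZMod d₂, ∑ J : ZMod d₁ × ZMod d₂,
          T (I.1, J.1) (I.2, J.2) :=
        Fintype.sum_prod_type' (f := fun (I : ZMod d₁ × ZMod d₂) (J : ZMod d₁ × ZMod d₂) => T (I.1, J.1) (I.2, J.2))
    _ = ∑ J : ZMod d₁ × ZMod d₂, ∑ I : ZMod d₁ × ZMod d₂,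
          T (I.1, J.1) (I.2, J.2) := Finset.sum_comm
    _ = ∑ J : ZMod d₁ × ZMod d₂,
          ((d₁ : ℝ) * d₂) * ∑ a : ZMod d₁ × ZMod d₂, ‖ρ a (a.1 + J.1, a.2 + J.2)‖ ^ 2 := by
        refine Finset.sum_congr rfl fun J _ => ?_
        have hform : ∀ I : ZMod d₁ × ZMod d₂, T (I.1, J.1) (I.2, J.2) =
            ‖∑ a : ZMod d₁ × ZMod d₂, (fun a : ZMod d₁ × ZMod d₂ => ρ a (a.1 + J.1, a.2 + J.2)) a *
              conj ((fun (I : ZMod d₁ × ZMod d₂) (a : ZMod d₁ × ZMod d₂) =>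
                chE d₁ ω₁ (I.1 * a.1) * chE d₂ ω₂ (I.2 * a.2)) I a)‖ ^ 2 := by
          intro I
          rw [hT]
          simp only
          rw [trace_mul_kron]
        rw [Finset.sum_congr rfl fun I _ => hform I]
        exact parseval _ ((d₁ : ℝ) * d₂) (ortho_prod d₁ d₂ hω₁ hω₂) _
    _ = ((d₁ : ℝ) * d₂) * ∑ a : ZMod d₁ × ZMod d₂, ∑ b : ZMod d₁ × ZMod d₂, ‖ρ a b‖ ^ 2 := by
        rw [← Finset.mul_sum]
        congr 1
        rw [Finset.sum_comm]
        refine Finset.sum_congr rfl fun a _ => ?_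
        exact Fintype.sum_equiv ((Equiv.addLeft a.1).prodCongr (Equiv.addLeft a.2))
          _ _ fun J => rfl

lemma sum_right0 (hω₁ : IsPrimitiveRoot ω₁ d₁)
    (ρ : Matrix (ZMod d₁ × ZMod d₂) (ZMod d₁ × ZMod d₂) ℂ) :
    ∑ p : ZMod d₁ × ZMod d₁,
        ‖Matrix.trace (ρ * ((Weyl d₁ ω₁ p.1 p.2) ⊗ₖ (Weyl d₂ ω₂ (0 : ZMod d₂) 0))ᴴ)‖ ^ 2 =
      (d₁ : ℝ) * ∑ m : ZMod d₁, ∑ m' : ZMod d₁, ‖mar2 d₁ d₂ ρ m m'‖ ^ 2 := by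
  classical
  have hform : ∀ i₁ j₁ : ZMod d₁,
      Matrix.trace (ρ * ((Weyl d₁ ω₁ i₁ j₁) ⊗ₖ (Weyl d₂ ω₂ (0 : ZMod d₂) 0))ᴴ) =
        ∑ m : ZMod d₁, mar2 d₁ d₂ ρ m (m + j₁) * conj (chE d₁ ω₁ (i₁ * m)) := by
    intro i₁ j₁
    rw [trace_mul_kron]
    rw [Fintype.sum_prod_type]
    refine Finset.sum_congr rfl fun m _ => ?_
    have hterm : ∀ y : ZMod d₂, ρ (m, y) ((m, y).1 + j₁, (m, y).2 + 0) *
        conj (chE d₁ ω₁ (i₁ * (m, y).1) * chE d₂ ω₂ (0 * (m, y).2)) =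
        ρ (m, y) (m + j₁, y) * conj (chE d₁ ω₁ (i₁ * m)) := by
      intro y
      simp [chE_zero]
    rw [Finset.sum_congr rfl fun y _ => hterm y, ← Finset.sum_mul]
    rfl
  calc ∑ p : ZMod d₁ × ZMod d₁,
        ‖Matrix.trace (ρ * ((Weyl d₁ ω₁ p.1 p.2) ⊗ₖ (Weyl d₂ ω₂ (0 : ZMod d₂) 0))ᴴ)‖ ^ 2
      = ∑ i₁ : ZMod d₁, ∑ j₁ : ZMod d₁,
          ‖Matrix.trace (ρ * ((Weyl d₁ ω₁ i₁ j₁) ⊗ₖ (Weyl d₂ ω₂ (0 : ZMod d₂) 0))ᴴ)‖ ^ 2 :=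
        Fintype.sum_prod_type' (f := fun (i₁ : ZMod d₁) (j₁ : ZMod d₁) =>
          ‖Matrix.trace (ρ * ((Weyl d₁ ω₁ i₁ j₁) ⊗ₖ (Weyl d₂ ω₂ (0 : ZMod d₂) 0))ᴴ)‖ ^ 2)
    _ = ∑ j₁ : ZMod d₁, ∑ i₁ : ZMod d₁,
          ‖∑ m : ZMod d₁, mar2 d₁ d₂ ρ m (m + j₁) * conj (chE d₁ ω₁ (i₁ * m))‖ ^ 2 := by
        rw [Finset.sum_comm]
        exact Finset.sum_congr rfl fun j₁ _ => Finset.sum_congr rfl fun i₁ _ => by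
          rw [hform i₁ j₁]
    _ = ∑ j₁ : ZMod d₁, (d₁ : ℝ) * ∑ m : ZMod d₁, ‖mar2 d₁ d₂ ρ m (m + j₁)‖ ^ 2 := by
        refine Finset.sum_congr rfl fun j₁ _ => ?_
        refine parseval (fun i m => chE d₁ ω₁ (i * m)) (d₁ : ℝ) (fun m m' => ?_) _
        rw [chE_ortho hω₁]
        push_cast
        rfl
    _ = (d₁ : ℝ) * ∑ m : ZMod d₁, ∑ m' : ZMod d₁, ‖mar2 d₁ d₂ ρ m m'‖ ^ 2 := by
        rw [← Finset.mul_sum]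
        congr 1
        rw [Finset.sum_comm]
        refine Finset.sum_congr rfl fun m _ => ?_
        exact Fintype.sum_equiv (Equiv.addLeft m) _ _ fun j₁ => rfl

lemma sum_left0 (hω₂ : IsPrimitiveRoot ω₂ d₂)
    (ρ : Matrix (ZMod d₁ × ZMod d₂) (ZMod d₁ × ZMod d₂) ℂ) :
    ∑ q : ZMod d₂ × ZMod d₂,
        ‖Matrix.trace (ρ * ((Weyl d₁ ω₁ (0 : ZMod d₁) 0) ⊗ₖ (Weyl d₂ ω₂ q.1 q.2))ᴴ)‖ ^ 2 =
      (d₂ : ℝ) * ∑ n : ZMod d₂, ∑ n' : ZMod d₂, ‖mar1 d₁ d₂ ρ n n'‖ ^ 2 := by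
  classical
  have hform : ∀ i₂ j₂ : ZMod d₂,
      Matrix.trace (ρ * ((Weyl d₁ ω₁ (0 : ZMod d₁) 0) ⊗ₖ (Weyl d₂ ω₂ i₂ j₂))ᴴ) =
        ∑ n : ZMod d₂, mar1 d₁ d₂ ρ n (n + j₂) * conj (chE d₂ ω₂ (i₂ * n)) := by
    intro i₂ j₂
    rw [trace_mul_kron]
    rw [Fintype.sum_prod_type]
    rw [Finset.sum_comm]
    refine Finset.sum_congr rfl fun n _ => ?_
    have hterm : ∀ x : ZMod d₁, ρ (x, n) ((x, n).1 + 0, (x, n).2 + j₂) *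
        conj (chE d₁ ω₁ (0 * (x, n).1) * chE d₂ ω₂ (i₂ * (x, n).2)) =
        ρ (x, n) (x, n + j₂) * conj (chE d₂ ω₂ (i₂ * n)) := by
      intro x
      simp [chE_zero]
    rw [Finset.sum_congr rfl fun x _ => hterm x, ← Finset.sum_mul]
    rfl
  calc ∑ q : ZMod d₂ × ZMod d₂,
        ‖Matrix.trace (ρ * ((Weyl d₁ ω₁ (0 : ZMod d₁) 0) ⊗ₖ (Weyl d₂ ω₂ q.1 q.2))ᴴ)‖ ^ 2
      = ∑ i₂ : ZMod d₂, ∑ j₂ : ZMod d₂,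
          ‖Matrix.trace (ρ * ((Weyl d₁ ω₁ (0 : ZMod d₁) 0) ⊗ₖ (Weyl d₂ ω₂ i₂ j₂))ᴴ)‖ ^ 2 :=
        Fintype.sum_prod_type' (f := fun (i₂ : ZMod d₂) (j₂ : ZMod d₂) =>
          ‖Matrix.trace (ρ * ((Weyl d₁ ω₁ (0 : ZMod d₁) 0) ⊗ₖ (Weyl d₂ ω₂ i₂ j₂))ᴴ)‖ ^ 2)
    _ = ∑ j₂ : ZMod d₂, ∑ i₂ : ZMod d₂,
          ‖∑ n : ZMod d₂, mar1 d₁ d₂ ρ n (n + j₂) * conj (chE d₂ ω₂ (i₂ * n))‖ ^ 2 := by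
        rw [Finset.sum_comm]
        exact Finset.sum_congr rfl fun j₂ _ => Finset.sum_congr rfl fun i₂ _ => by
          rw [hform i₂ j₂]
    _ = ∑ j₂ : ZMod d₂, (d₂ : ℝ) * ∑ n : ZMod d₂, ‖mar1 d₁ d₂ ρ n (n + j₂)‖ ^ 2 := by
        refine Finset.sum_congr rfl fun j₂ _ => ?_
        refine parseval (fun i n => chE d₂ ω₂ (i * n)) (d₂ : ℝ) (fun n n' => ?_) _
        rw [chE_ortho hω₂]
        push_cast
        rfl
    _ = (d₂ : ℝ) * ∑ n : ZMod d₂, ∑ n' : ZMod d₂, ‖mar1 d₁ d₂ ρ n n'‖ ^ 2 := by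
        rw [← Finset.mul_sum]
        congr 1
        rw [Finset.sum_comm]
        refine Finset.sum_congr rfl fun n _ => ?_
        exact Fintype.sum_equiv (Equiv.addLeft n) _ _ fun j₂ => rfl

lemma term00 (ρ : Matrix (ZMod d₁ × ZMod d₂) (ZMod d₁ × ZMod d₂) ℂ) (hτ : ρ.trace = 1) :
    ‖Matrix.trace (ρ * ((Weyl d₁ ω₁ (0 : ZMod d₁) 0) ⊗ₖ (Weyl d₂ ω₂ (0 : ZMod d₂) 0))ᴴ)‖ ^ 2
      = 1 := by
  rw [trace_mul_kron]
  have h : ∑ a : ZMod d₁ × ZMod d₂, ρ a (a.1 + 0, a.2 + 0) *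
      conj (chE d₁ ω₁ (0 * a.1) * chE d₂ ω₂ (0 * a.2)) = Matrix.trace ρ := by
    unfold Matrix.trace
    refine Finset.sum_congr rfl fun a _ => ?_
    simp [chE_zero]
  rw [h, hτ]
  simp
end Appl

lemma re_sq_le_normsq (z : ℂ) : z.re ^ 2 ≤ ‖z‖ ^ 2 := by
  have h := Complex.abs_re_le_norm z
  calc z.re ^ 2 = |z.re| ^ 2 := (sq_abs _).symm
    _ ≤ ‖z‖ ^ 2 := pow_le_pow_left₀ (abs_nonneg _) h 2

open scoped MatrixOrder in
lemma psd_eq_ctm {n : Type*} [Fintype n] [DecidableEq n] {A : Matrix n n ℂ}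
    (h : A.PosSemidef) : ∃ B : Matrix n n ℂ, A = Bᴴ * B := by
  obtain ⟨B, hB⟩ := CStarAlgebra.nonneg_iff_eq_star_mul_self.mp h.nonneg
  exact ⟨B, hB⟩

section Ineq
variable (d₁ d₂ : ℕ) [NeZero d₁] [NeZero d₂]
variable (ρ : Matrix (ZMod d₁ × ZMod d₂) (ZMod d₁ × ZMod d₂) ℂ)

lemma A_nonneg : (0:ℝ) ≤ ∑ a : ZMod d₁ × ZMod d₂, ∑ b : ZMod d₁ × ZMod d₂, ‖ρ a b‖ ^ 2 := by
  positivity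

lemma A_le_one (hρ : ρ.PosSemidef) (hτ : ρ.trace = 1) :
    ∑ a : ZMod d₁ × ZMod d₂, ∑ b : ZMod d₁ × ZMod d₂, ‖ρ a b‖ ^ 2 ≤ 1 := by
  classical
  obtain ⟨Cm, hC⟩ := psd_eq_ctm hρ
  set s : (ZMod d₁ × ZMod d₂) → ℝ := fun a => ∑ t, ‖Cm t a‖ ^ 2 with hs
  have hdiag : ∀ a, ρ a a = ((s a : ℝ) : ℂ) := by
    intro a
    rw [hC]
    simp only [Matrix.mul_apply, Matrix.conjTranspose_apply, hs]
    rw [Complex.ofReal_sum]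
    refine Finset.sum_congr rfl fun t _ => ?_
    rw [← mul_conj_self' (Cm t a)]
    exact mul_comm _ _
  have hsum : ∑ a, s a = 1 := by
    have htr : Matrix.trace ρ = ((∑ a, s a : ℝ) : ℂ) := by
      unfold Matrix.trace
      rw [Complex.ofReal_sum]
      exact Finset.sum_congr rfl fun a _ => hdiag a
    rw [hτ] at htr
    exact_mod_cast htr.symm
  have hentry : ∀ a b, ‖ρ a b‖ ^ 2 ≤ s a * s b := by
    intro a b
    have hab : ρ a b = ∑ t, conj (Cm t a) * Cm t b := by
      rw [hC]; simp [Matrix.mul_apply, Matrix.conjTranspose_apply]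
    have hn : ‖ρ a b‖ ≤ ∑ t, ‖Cm t a‖ * ‖Cm t b‖ := by
      rw [hab]
      refine (norm_sum_le _ _).trans ?_
      refine Finset.sum_le_sum fun t _ => ?_
      rw [norm_mul, RCLike.norm_conj]
    calc ‖ρ a b‖ ^ 2 ≤ (∑ t, ‖Cm t a‖ * ‖Cm t b‖) ^ 2 :=
          pow_le_pow_left₀ (norm_nonneg _) hn 2
      _ ≤ (∑ t, ‖Cm t a‖ ^ 2) * (∑ t, ‖Cm t b‖ ^ 2) :=
          Finset.sum_mul_sq_le_sq_mul_sq _ _ _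
      _ = s a * s b := rfl
  calc ∑ a : ZMod d₁ × ZMod d₂, ∑ b : ZMod d₁ × ZMod d₂, ‖ρ a b‖ ^ 2
      ≤ ∑ a : ZMod d₁ × ZMod d₂, ∑ b : ZMod d₁ × ZMod d₂, s a * s b :=
        Finset.sum_le_sum fun a _ => Finset.sum_le_sum fun b _ => hentry a b
    _ = (∑ a, s a) * (∑ b, s b) := by rw [Finset.sum_mul_sum]
    _ = 1 := by rw [hsum, one_mul]

lemma A_le_d2B (hρ : ρ.PosSemidef) :
    ∑ a : ZMod d₁ × ZMod d₂, ∑ b : ZMod d₁ × ZMod d₂, ‖ρ a b‖ ^ 2 ≤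
      (d₂ : ℝ) * ∑ m : ZMod d₁, ∑ m' : ZMod d₁, ‖mar2 d₁ d₂ ρ m m'‖ ^ 2 := by
  classical
  obtain ⟨Cm, hC⟩ := psd_eq_ctm hρ
  set W : ZMod d₂ → Matrix (ZMod d₁ × ZMod d₂) (ZMod d₁) ℂ :=
    fun k => Matrix.of fun t m => Cm t (m, k) with hW
  have hE : ∀ (m m' : ZMod d₁) (k k' : ZMod d₂),
      ρ (m, k) (m', k') = ((W k)ᴴ * W k') m m' := by
    intro m m' k k'
    rw [hC]
    simp [Matrix.mul_apply, Matrix.conjTranspose_apply, hW]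
  have hA : ∑ a : ZMod d₁ × ZMod d₂, ∑ b : ZMod d₁ × ZMod d₂, ‖ρ a b‖ ^ 2
      = ∑ k : ZMod d₂, ∑ k' : ZMod d₂, fsq ((W k)ᴴ * W k') := by
    calc ∑ a : ZMod d₁ × ZMod d₂, ∑ b : ZMod d₁ × ZMod d₂, ‖ρ a b‖ ^ 2
        = ∑ m : ZMod d₁, ∑ k : ZMod d₂, ∑ b : ZMod d₁ × ZMod d₂, ‖ρ (m, k) b‖ ^ 2 :=
          Fintype.sum_prod_type _
      _ = ∑ m : ZMod d₁, ∑ k : ZMod d₂, ∑ m' : ZMod d₁, ∑ k' : ZMod d₂,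
            ‖ρ (m, k) (m', k')‖ ^ 2 :=
          Finset.sum_congr rfl fun m _ => Finset.sum_congr rfl fun k _ =>
            Fintype.sum_prod_type _
      _ = ∑ m : ZMod d₁, ∑ k : ZMod d₂, ∑ k' : ZMod d₂, ∑ m' : ZMod d₁,
            ‖ρ (m, k) (m', k')‖ ^ 2 :=
          Finset.sum_congr rfl fun m _ => Finset.sum_congr rfl fun k _ =>
            Finset.sum_comm
      _ = ∑ k : ZMod d₂, ∑ m : ZMod d₁, ∑ k' : ZMod d₂, ∑ m' : ZMod d₁,
            ‖ρ (m, k) (m', k')‖ ^ 2 := Finset.sum_comm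
      _ = ∑ k : ZMod d₂, ∑ k' : ZMod d₂, ∑ m : ZMod d₁, ∑ m' : ZMod d₁,
            ‖ρ (m, k) (m', k')‖ ^ 2 :=
          Finset.sum_congr rfl fun k _ => Finset.sum_comm
      _ = ∑ k : ZMod d₂, ∑ k' : ZMod d₂, fsq ((W k)ᴴ * W k') := by
          refine Finset.sum_congr rfl fun k _ => Finset.sum_congr rfl fun k' _ => ?_
          unfold fsq
          refine Finset.sum_congr rfl fun m _ => Finset.sum_congr rfl fun m' _ => ?_
          rw [hE]
  have hmar : mar2 d₁ d₂ ρ = ∑ k : ZMod d₂, (W k)ᴴ * W k := by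
    ext m m'
    rw [Matrix.sum_apply]
    unfold mar2
    simp only [Matrix.of_apply]
    exact Finset.sum_congr rfl fun k _ => hE m m' k k
  have hB : ∑ m : ZMod d₁, ∑ m' : ZMod d₁, ‖mar2 d₁ d₂ ρ m m'‖ ^ 2
      = fsq (∑ k : ZMod d₂, (W k)ᴴ * W k) := by
    rw [← hmar]; rfl
  rw [hA, hB]
  have := gram_bound W
  rwa [ZMod.card d₂] at this

lemma A_le_d1C (hρ : ρ.PosSemidef) :
    ∑ a : ZMod d₁ × ZMod d₂, ∑ b : ZMod d₁ × ZMod d₂, ‖ρ a b‖ ^ 2 ≤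
      (d₁ : ℝ) * ∑ n : ZMod d₂, ∑ n' : ZMod d₂, ‖mar1 d₁ d₂ ρ n n'‖ ^ 2 := by
  classical
  obtain ⟨Cm, hC⟩ := psd_eq_ctm hρ
  set U : ZMod d₁ → Matrix (ZMod d₁ × ZMod d₂) (ZMod d₂) ℂ :=
    fun m => Matrix.of fun t n => Cm t (m, n) with hU
  have hE : ∀ (m m' : ZMod d₁) (n n' : ZMod d₂),
      ρ (m, n) (m', n') = ((U m)ᴴ * U m') n n' := by
    intro m m' n n'
    rw [hC]
    simp [Matrix.mul_apply, Matrix.conjTranspose_apply, hU]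
  have hA : ∑ a : ZMod d₁ × ZMod d₂, ∑ b : ZMod d₁ × ZMod d₂, ‖ρ a b‖ ^ 2
      = ∑ m : ZMod d₁, ∑ m' : ZMod d₁, fsq ((U m)ᴴ * U m') := by
    calc ∑ a : ZMod d₁ × ZMod d₂, ∑ b : ZMod d₁ × ZMod d₂, ‖ρ a b‖ ^ 2
        = ∑ m : ZMod d₁, ∑ n : ZMod d₂, ∑ b : ZMod d₁ × ZMod d₂, ‖ρ (m, n) b‖ ^ 2 :=
          Fintype.sum_prod_type _
      _ = ∑ m : ZMod d₁, ∑ n : ZMod d₂, ∑ m' : ZMod d₁, ∑ n' : ZMod d₂,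
            ‖ρ (m, n) (m', n')‖ ^ 2 :=
          Finset.sum_congr rfl fun m _ => Finset.sum_congr rfl fun n _ =>
            Fintype.sum_prod_type _
      _ = ∑ m : ZMod d₁, ∑ m' : ZMod d₁, ∑ n : ZMod d₂, ∑ n' : ZMod d₂,
            ‖ρ (m, n) (m', n')‖ ^ 2 :=
          Finset.sum_congr rfl fun m _ => Finset.sum_comm
      _ = ∑ m : ZMod d₁, ∑ m' : ZMod d₁, fsq ((U m)ᴴ * U m') := by
          refine Finset.sum_congr rfl fun m _ => Finset.sum_congr rfl fun m' _ => ?_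
          unfold fsq
          refine Finset.sum_congr rfl fun n _ => Finset.sum_congr rfl fun n' _ => ?_
          rw [hE]
  have hmar : mar1 d₁ d₂ ρ = ∑ m : ZMod d₁, (U m)ᴴ * U m := by
    ext n n'
    rw [Matrix.sum_apply]
    unfold mar1
    simp only [Matrix.of_apply]
    exact Finset.sum_congr rfl fun m _ => hE m m n n'
  have hCC : ∑ n : ZMod d₂, ∑ n' : ZMod d₂, ‖mar1 d₁ d₂ ρ n n'‖ ^ 2
      = fsq (∑ m : ZMod d₁, (U m)ᴴ * U m) := by
    rw [← hmar]; rfl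
  rw [hA, hCC]
  have := gram_bound U
  rwa [ZMod.card d₁] at this

lemma trace_expand : ρ.trace = ∑ m : ZMod d₁, ∑ n : ZMod d₂, ρ (m, n) (m, n) := by
  unfold Matrix.trace
  rw [Fintype.sum_prod_type (f := fun a : ZMod d₁ × ZMod d₂ => ρ.diag a)]
  rfl

lemma trace_mar2 (hτ : ρ.trace = 1) : ∑ m : ZMod d₁, mar2 d₁ d₂ ρ m m = 1 := by
  rw [← hτ, trace_expand]
  rfl

lemma trace_mar1 (hτ : ρ.trace = 1) : ∑ n : ZMod d₂, mar1 d₁ d₂ ρ n n = 1 := by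
  rw [← hτ, trace_expand, Finset.sum_comm]
  rfl

lemma diag_bound {d : ℕ} [NeZero d] (M : Matrix (ZMod d) (ZMod d) ℂ)
    (h : ∑ m : ZMod d, M m m = 1) :
    1 ≤ (d : ℝ) * ∑ m : ZMod d, ∑ m' : ZMod d, ‖M m m'‖ ^ 2 := by
  have hre : ∑ m : ZMod d, (M m m).re = 1 := by
    have := congrArg Complex.re h
    rw [Complex.re_sum] at this
    simpa using this
  have h1 : (1:ℝ) = (∑ m : ZMod d, (M m m).re) ^ 2 := by rw [hre]; norm_num
  have h2 : (∑ m : ZMod d, (M m m).re) ^ 2 ≤ (d : ℝ) * ∑ m : ZMod d, (M m m).re ^ 2 := by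
    have := sq_sum_le_card_mul_sum_sq (α := ℝ) (s := (Finset.univ : Finset (ZMod d)))
      (f := fun m => (M m m).re)
    simpa [ZMod.card d] using this
  have h3 : ∑ m : ZMod d, (M m m).re ^ 2 ≤ ∑ m : ZMod d, ‖M m m‖ ^ 2 :=
    Finset.sum_le_sum fun m _ => re_sq_le_normsq _
  have h4 : ∑ m : ZMod d, ‖M m m‖ ^ 2 ≤ ∑ m : ZMod d, ∑ m' : ZMod d, ‖M m m'‖ ^ 2 := by
    refine Finset.sum_le_sum fun m _ => ?_
    exact Finset.single_le_sum (f := fun m' => ‖M m m'‖ ^ 2)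
      (fun m' _ => by positivity) (Finset.mem_univ m)
  have hd : (0:ℝ) ≤ (d : ℝ) := by positivity
  nlinarith [h1, h2, h3, h4]
end Ineq

lemma split_sum {α β : Type*} [Fintype α] [Fintype β] [DecidableEq α] [DecidableEq β]
    (T : α → β → ℝ) (a₀ : α) (b₀ : β) :
    ∑ p ∈ Finset.univ.filter (fun p => p ≠ a₀),
        ∑ q ∈ Finset.univ.filter (fun q => q ≠ b₀), T p q
      = (((∑ p : α, ∑ q : β, T p q) - ∑ q : β, T a₀ q)
          - ((∑ p : α, T p b₀) - T a₀ b₀)) := by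
  have hf1 : Finset.univ.filter (fun p : α => p ≠ a₀) = Finset.univ.erase a₀ :=
    Finset.filter_ne' _ _
  have hf2 : Finset.univ.filter (fun q : β => q ≠ b₀) = Finset.univ.erase b₀ :=
    Finset.filter_ne' _ _
  rw [hf1, hf2]
  have hrow : ∀ p, ∑ q ∈ Finset.univ.erase b₀, T p q = (∑ q : β, T p q) - T p b₀ :=
    fun p => Finset.sum_erase_eq_sub (Finset.mem_univ _)
  calc ∑ p ∈ Finset.univ.erase a₀, ∑ q ∈ Finset.univ.erase b₀, T p q
      = ∑ p ∈ Finset.univ.erase a₀, ((∑ q : β, T p q) - T p b₀) :=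
        Finset.sum_congr rfl fun p _ => hrow p
    _ = (∑ p ∈ Finset.univ.erase a₀, ∑ q : β, T p q)
        - ∑ p ∈ Finset.univ.erase a₀, T p b₀ := Finset.sum_sub_distrib _ _
    _ = _ := by
        rw [Finset.sum_erase_eq_sub (Finset.mem_univ a₀),
            Finset.sum_erase_eq_sub (Finset.mem_univ a₀)]

/-- For any (mixed) density matrix `ρ` on `ℂ^{d₁} ⊗ ℂ^{d₂}`, the correlation
tensor satisfies `‖T^{(12)}‖² ≤ min{d₁d₂ − d₁/d₂, d₁d₂ − d₂/d₁}`. -/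
theorem bipartite_corr_bound (d₁ d₂ : ℕ) [NeZero d₁] [NeZero d₂]
    (ω₁ ω₂ : ℂ) (hω₁ : IsPrimitiveRoot ω₁ d₁) (hω₂ : IsPrimitiveRoot ω₂ d₂)
    (ρ : Matrix (ZMod d₁ × ZMod d₂) (ZMod d₁ × ZMod d₂) ℂ)
    (hρ : ρ.PosSemidef) (hτ : ρ.trace = 1) :
    ∑ p ∈ Finset.univ.filter (fun p : ZMod d₁ × ZMod d₁ => p ≠ (0, 0)),
      ∑ q ∈ Finset.univ.filter (fun q : ZMod d₂ × ZMod d₂ => q ≠ (0, 0)),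
        ‖Matrix.trace (ρ * ((Weyl d₁ ω₁ p.1 p.2) ⊗ₖ (Weyl d₂ ω₂ q.1 q.2))ᴴ)‖ ^ 2 ≤
      min ((d₁ : ℝ) * d₂ - d₁ / d₂) ((d₁ : ℝ) * d₂ - d₂ / d₁) := by
  classical
  rw [split_sum (fun (p : ZMod d₁ × ZMod d₁) (q : ZMod d₂ × ZMod d₂) =>
    ‖Matrix.trace (ρ * ((Weyl d₁ ω₁ p.1 p.2) ⊗ₖ (Weyl d₂ ω₂ q.1 q.2))ᴴ)‖ ^ 2) (0, 0) (0, 0)]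
  rw [show ((0, 0) : ZMod d₁ × ZMod d₁).1 = 0 from rfl,
      show ((0, 0) : ZMod d₁ × ZMod d₁).2 = 0 from rfl,
      show ((0, 0) : ZMod d₂ × ZMod d₂).1 = 0 from rfl,
      show ((0, 0) : ZMod d₂ × ZMod d₂).2 = 0 from rfl]
  rw [sum_all d₁ d₂ hω₁ hω₂ ρ, sum_left0 d₁ d₂ (ω₁ := ω₁) hω₂ ρ,
      sum_right0 d₁ d₂ (ω₂ := ω₂) hω₁ ρ, term00 d₁ d₂ (ω₁ := ω₁) (ω₂ := ω₂) ρ hτ]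
  set A := ∑ a : ZMod d₁ × ZMod d₂, ∑ b : ZMod d₁ × ZMod d₂, ‖ρ a b‖ ^ 2 with hA
  set B := ∑ m : ZMod d₁, ∑ m' : ZMod d₁, ‖mar2 d₁ d₂ ρ m m'‖ ^ 2 with hB
  set C := ∑ n : ZMod d₂, ∑ n' : ZMod d₂, ‖mar1 d₁ d₂ ρ n n'‖ ^ 2 with hC
  have hA0 : (0:ℝ) ≤ A := A_nonneg d₁ d₂ ρ
  have hA1 : A ≤ 1 := A_le_one d₁ d₂ ρ hρ hτ
  have h2B : A ≤ (d₂ : ℝ) * B := A_le_d2B d₁ d₂ ρ hρ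
  have h1C : A ≤ (d₁ : ℝ) * C := A_le_d1C d₁ d₂ ρ hρ
  have h1B : 1 ≤ (d₁ : ℝ) * B := diag_bound _ (trace_mar2 d₁ d₂ ρ hτ)
  have h2C : 1 ≤ (d₂ : ℝ) * C := diag_bound _ (trace_mar1 d₁ d₂ ρ hτ)
  have hd1 : (0:ℝ) < d₁ := by
    exact_mod_cast Nat.pos_of_ne_zero (NeZero.ne d₁)
  have hd2 : (0:ℝ) < d₂ := by
    exact_mod_cast Nat.pos_of_ne_zero (NeZero.ne d₂)
  have h1d1 : (1:ℝ) ≤ d₁ := by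
    exact_mod_cast Nat.one_le_iff_ne_zero.mpr (NeZero.ne d₁)
  have h1d2 : (1:ℝ) ≤ d₂ := by
    exact_mod_cast Nat.one_le_iff_ne_zero.mpr (NeZero.ne d₂)
  refine le_min ?_ ?_
  · have hdiv1 : (d₁:ℝ)/d₂ * d₂ = d₁ := div_mul_cancel₀ _ (ne_of_gt hd2)
    rw [← mul_le_mul_iff_of_pos_right hd2]
    have e1 : (d₁:ℝ) * A ≤ d₁ * (d₂ * B) := mul_le_mul_of_nonneg_left h2B (le_of_lt hd1)
    have e2 : (d₂:ℝ) * 1 ≤ d₂ * (d₂ * C) := mul_le_mul_of_nonneg_left h2C (le_of_lt hd2)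
    have e3 : (0:ℝ) ≤ (1 - A) * ((d₁:ℝ) * (d₂ * d₂ - 1)) := by
      apply mul_nonneg (sub_nonneg.mpr hA1)
      apply mul_nonneg (le_of_lt hd1)
      nlinarith [h1d2]
    nlinarith [e1, e2, e3, hdiv1]
  · have hdiv2 : (d₂:ℝ)/d₁ * d₁ = d₂ := div_mul_cancel₀ _ (ne_of_gt hd1)
    rw [← mul_le_mul_iff_of_pos_right hd1]
    have e1 : (d₂:ℝ) * A ≤ d₂ * (d₁ * C) := mul_le_mul_of_nonneg_left h1C (le_of_lt hd2)
    have e2 : (d₁:ℝ) * 1 ≤ d₁ * (d₁ * B) := mul_le_mul_of_nonneg_left h1B (le_of_lt hd1)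
    have e3 : (0:ℝ) ≤ (1 - A) * ((d₂:ℝ) * (d₁ * d₁ - 1)) := by
      apply mul_nonneg (sub_nonneg.mpr hA1)
      apply mul_nonneg (le_of_lt hd2)
      nlinarith [h1d1]
    nlinarith [e1, e2, e3, hdiv2]
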